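/- Let X be an ℝⁿ-valued random vector with density x ↦ g(x Σ⁻¹ xᵗ)/√(det Σ) where Σ = C Cᵗ is positive definite, let Γ be symmetric with Cᵗ Γ C = O D Oᵗ for orthogonal O and diagonal D with nonzero entries, and let Θ, V ∈ ℝ. Then P(Θ + X Γ Xᵗ/2 ≤ −V) = (det |D|)^{-1/2} ∫_{{w : |w₋|² − |w₊|² ≥ 2(V+Θ)}} g(w |D|⁻¹ wᵗ) dw, where w = (w₊, w₋) is the splitting of coordinates according to positive and negative diagonal entries of D. -/

import Mathlib

open MeasureTheory Matrix Set Finset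
open scoped NNReal ENNReal

/-- Reduction of the quadratic loss probability to an integral over a hyperboloid:
if `X` has elliptic density `g(xΣ⁻¹xᵗ)/√(det Σ)` with `Σ = CCᵗ` positive definite and
`CᵗΓC = O (diagonal D) Oᵗ` with `O` orthogonal and `D` with nonzero entries, then
`P(Θ + XΓXᵗ/2 ≤ -V) = (det|D|)^{-1/2} ∫_{|w₋|²-|w₊|² ≥ 2(V+Θ)} g(w|D|⁻¹wᵗ) dw`. -/
theorem stmt3 {Ω : Type*} [MeasurableSpace Ω] (P : Measure Ω) [IsProbabilityMeasure P]
    {n : ℕ} (X : Ω → Fin n → ℝ) (hX : Measurable X)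
    (S C G O : Matrix (Fin n) (Fin n) ℝ) (D : Fin n → ℝ)
    (hS : S.PosDef) (hSC : S = C * Cᵀ) (hC : IsUnit C.det)
    (hG : Gᵀ = G) (hO : O * Oᵀ = 1)
    (hdiag : Cᵀ * G * C = O * Matrix.diagonal D * Oᵀ) (hD : ∀ i, D i ≠ 0)
    (g : ℝ → ℝ≥0) (hg : Measurable g)
    (hlaw : Measure.map X P
      = volume.withDensity
          (fun x => (g (x ⬝ᵥ S⁻¹.mulVec x) : ℝ≥0∞) / ENNReal.ofReal (Real.sqrt S.det)))
    (Θ V : ℝ) :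
    P {ω | Θ + (X ω ⬝ᵥ G.mulVec (X ω)) / 2 ≤ -V}
      = (ENNReal.ofReal (Real.sqrt (∏ i, |D i|)))⁻¹ *
        ∫⁻ w in {w : Fin n → ℝ |
            2 * (V + Θ) ≤ (∑ i ∈ Finset.univ.filter fun i => D i < 0, w i ^ 2)
              - ∑ i ∈ Finset.univ.filter fun i => 0 < D i, w i ^ 2},
          (g (∑ i, w i ^ 2 / |D i|) : ℝ≥0∞) := by
  classical
  set e : Fin n → ℝ := fun i => (Real.sqrt |D i|)⁻¹ with he
  set A : Matrix (Fin n) (Fin n) ℝ := C * O * Matrix.diagonal e with hA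
  have habs : ∀ i, (0:ℝ) < |D i| := fun i => abs_pos.mpr (hD i)
  have hsq : ∀ i, Real.sqrt |D i| > 0 := fun i => Real.sqrt_pos.mpr (habs i)
  have hee : ∀ i, e i * e i = |D i|⁻¹ := fun i => by
    rw [he]; simp only []
    rw [← mul_inv, Real.mul_self_sqrt (abs_nonneg _)]
  have hO' : Oᵀ * O = 1 := mul_eq_one_comm.mp hO
  have cancel : ∀ X : Matrix (Fin n) (Fin n) ℝ, Oᵀ * (O * X) = X := fun X => by
    rw [← Matrix.mul_assoc, hO', Matrix.one_mul]
  have hCdet : C.det ≠ 0 := by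
    intro h; rw [h] at hC; exact (by simp at hC : False)
  have hCdetT : IsUnit Cᵀ.det := by rwa [det_transpose]
  -- quadratic form transport
  have quad : ∀ (B M : Matrix (Fin n) (Fin n) ℝ) (w : Fin n → ℝ),
      (B.mulVec w) ⬝ᵥ M.mulVec (B.mulVec w) = w ⬝ᵥ (Bᵀ * M * B).mulVec w := by
    intro B M w
    exact (by rw [← mulVec_mulVec, ← mulVec_mulVec, dotProduct_mulVec w Bᵀ, vecMul_transpose] :
      w ⬝ᵥ (Bᵀ * M * B).mulVec w = (B.mulVec w) ⬝ᵥ M.mulVec (B.mulVec w)).symm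
  have diagquad : ∀ (d : Fin n → ℝ) (w : Fin n → ℝ),
      w ⬝ᵥ (Matrix.diagonal d).mulVec w = ∑ i, d i * w i ^ 2 := by
    intro d w
    simp only [dotProduct, mulVec_diagonal]
    exact Finset.sum_congr rfl fun i _ => by ring
  have hGA : Aᵀ * G * A = Matrix.diagonal (fun i => D i / |D i|) := by
    rw [hA]
    simp only [transpose_mul, diagonal_transpose, Matrix.mul_assoc]
    rw [show Cᵀ * (G * (C * (O * Matrix.diagonal e))) = (Cᵀ * G * C) * (O * Matrix.diagonal e) by
      simp [Matrix.mul_assoc], hdiag]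
    simp only [Matrix.mul_assoc, cancel]
    simp only [← Matrix.mul_assoc, diagonal_mul_diagonal]
    exact congrArg Matrix.diagonal (funext fun i => by
      rw [show e i * (D i * e i) = D i * (e i * e i) from by ring, hee i, div_eq_mul_inv])
  have hSA : Aᵀ * S⁻¹ * A = Matrix.diagonal (fun i => |D i|⁻¹) := by
    rw [hSC, Matrix.mul_inv_rev, hA]
    simp only [transpose_mul, diagonal_transpose, Matrix.mul_assoc]
    rw [show Cᵀ * ((Cᵀ)⁻¹ * (C⁻¹ * (C * (O * Matrix.diagonal e))))
        = (Cᵀ * (Cᵀ)⁻¹) * ((C⁻¹ * C) * (O * Matrix.diagonal e)) by simp [Matrix.mul_assoc],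
      Matrix.mul_nonsing_inv _ hCdetT, Matrix.nonsing_inv_mul _ hC, Matrix.one_mul,
      Matrix.one_mul]
    simp only [Matrix.mul_assoc, cancel]
    simp only [← Matrix.mul_assoc, diagonal_mul_diagonal]
    exact congrArg Matrix.diagonal (funext hee)
  -- determinants
  have hdetO : |O.det| = 1 := by
    have h := congrArg Matrix.det hO
    rw [det_mul, det_transpose, det_one] at h
    rcases mul_self_eq_one_iff.mp h with h1 | h1 <;> rw [h1] <;> norm_num
  have hprodpos : (0:ℝ) < ∏ i, |D i| := Finset.prod_pos fun i _ => habs i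
  have hsqrtprod : Real.sqrt (∏ i, |D i|) = ∏ i, Real.sqrt |D i| := by
    rw [show (∏ i, |D i|) = (∏ i, Real.sqrt |D i|) ^ 2 by
      rw [← Finset.prod_pow]
      exact (Finset.prod_congr rfl fun i _ => (Real.sq_sqrt (abs_nonneg _)).symm)]
    exact Real.sqrt_sq (Finset.prod_nonneg fun i _ => (hsq i).le)
  have hsqrtprodpos : (0:ℝ) < Real.sqrt (∏ i, |D i|) := Real.sqrt_pos.mpr hprodpos
  have hdetS : Real.sqrt S.det = |C.det| := by
    rw [hSC, det_mul, det_transpose, Real.sqrt_mul_self_eq_abs]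
  have hdetSpos : (0:ℝ) < Real.sqrt S.det := by
    rw [hdetS]; exact abs_pos.mpr hCdet
  have hdetA : |A.det| = Real.sqrt S.det * (Real.sqrt (∏ i, |D i|))⁻¹ := by
    rw [hA, det_mul, det_mul, det_diagonal, abs_mul, abs_mul, hdetO, mul_one, hdetS,
      Finset.abs_prod, hsqrtprod, ← Finset.prod_inv_distrib]
    congr 1
    exact Finset.prod_congr rfl fun i _ => by rw [he]; simp [abs_of_pos (hsq i), abs_of_pos]
  have hdetAne : A.det ≠ 0 := by
    intro h
    rw [h, abs_zero] at hdetA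
    exact absurd hdetA.symm (by positivity)
  -- measurability
  have hqm : ∀ M : Matrix (Fin n) (Fin n) ℝ, Measurable fun x : Fin n → ℝ => x ⬝ᵥ M.mulVec x := by
    intro M
    simp only [dotProduct, Matrix.mulVec]
    exact Finset.measurable_sum _ fun i _ =>
      ((measurable_pi_apply i).mul (Finset.measurable_sum _ fun j _ =>
        (measurable_const.mul (measurable_pi_apply j))))
  have hsmeas : MeasurableSet {x : Fin n → ℝ | Θ + (x ⬝ᵥ G.mulVec x) / 2 ≤ -V} :=
    measurableSet_le (by fun_prop (disch := exact hqm G)) measurable_const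
  have hfm : Measurable fun x : Fin n → ℝ =>
      (g (x ⬝ᵥ S⁻¹.mulVec x) : ℝ≥0∞) / ENNReal.ofReal (Real.sqrt S.det) :=
    (measurable_coe_nnreal_ennreal.comp (hg.comp (hqm S⁻¹))).div measurable_const
  have hT : Measurable (Matrix.toLin' A) :=
    (Matrix.toLin' A).continuous_of_finiteDimensional.measurable
  -- sum splitting
  have hsplit : ∀ w : Fin n → ℝ, (∑ i, D i / |D i| * w i ^ 2)
      = (∑ i ∈ Finset.univ.filter fun i => 0 < D i, w i ^ 2)
        - ∑ i ∈ Finset.univ.filter fun i => D i < 0, w i ^ 2 := by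
    intro w
    rw [← Finset.sum_filter_add_sum_filter_not Finset.univ (fun i => 0 < D i)]
    have h2 : Finset.univ.filter (fun i => ¬ 0 < D i) = Finset.univ.filter (fun i => D i < 0) :=
      Finset.filter_congr fun i _ => by
        constructor
        · intro h; exact lt_of_le_of_ne (not_lt.mp h) (hD i)
        · intro h; exact not_lt.mpr h.le
    rw [h2]
    have ha : ∑ i ∈ Finset.univ.filter (fun i => 0 < D i), D i / |D i| * w i ^ 2
        = ∑ i ∈ Finset.univ.filter (fun i => 0 < D i), w i ^ 2 :=
      Finset.sum_congr rfl fun i hi => by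
        have hpos := (Finset.mem_filter.mp hi).2
        rw [abs_of_pos hpos, div_self hpos.ne', one_mul]
    have hb : ∑ i ∈ Finset.univ.filter (fun i => D i < 0), D i / |D i| * w i ^ 2
        = ∑ i ∈ Finset.univ.filter (fun i => D i < 0), -(w i ^ 2) :=
      Finset.sum_congr rfl fun i hi => by
        have hneg := (Finset.mem_filter.mp hi).2
        rw [abs_of_neg hneg, div_neg, div_self (hD i), neg_one_mul]
    rw [ha, hb, Finset.sum_neg_distrib, ← sub_eq_add_neg]
  set s : Set (Fin n → ℝ) := {x | Θ + (x ⬝ᵥ G.mulVec x) / 2 ≤ -V} with hsdef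
  have hpre : (Matrix.toLin' A) ⁻¹' s
      = {w : Fin n → ℝ |
          2 * (V + Θ) ≤ (∑ i ∈ Finset.univ.filter fun i => D i < 0, w i ^ 2)
            - ∑ i ∈ Finset.univ.filter fun i => 0 < D i, w i ^ 2} := by
    ext w
    simp only [Set.mem_preimage, Matrix.toLin'_apply, hsdef, Set.mem_setOf_eq]
    rw [quad A G w, hGA, diagquad, hsplit w]
    constructor <;> intro h <;> linarith
  have hxSx : ∀ w : Fin n → ℝ,
      (A.mulVec w) ⬝ᵥ S⁻¹.mulVec (A.mulVec w) = ∑ i, w i ^ 2 / |D i| := by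
    intro w
    rw [quad A S⁻¹ w, hSA, diagquad]
    exact Finset.sum_congr rfl fun i _ => by rw [div_eq_mul_inv, mul_comm]
  have hmap := Real.map_matrix_volume_pi_eq_smul_volume_pi (M := A) hdetAne
  have hvol : (volume : Measure (Fin n → ℝ))
      = ENNReal.ofReal |A.det| • Measure.map (Matrix.toLin' A) volume := by
    rw [hmap, smul_smul, ← ENNReal.ofReal_mul (abs_nonneg _), ← abs_mul,
      mul_inv_cancel₀ hdetAne, abs_one, ENNReal.ofReal_one, one_smul]
  have step1 : P {ω | Θ + (X ω ⬝ᵥ G.mulVec (X ω)) / 2 ≤ -V}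
      = ∫⁻ x in s, (g (x ⬝ᵥ S⁻¹.mulVec x) : ℝ≥0∞) / ENNReal.ofReal (Real.sqrt S.det) ∂volume := by
    have h0 : P {ω | Θ + (X ω ⬝ᵥ G.mulVec (X ω)) / 2 ≤ -V} = Measure.map X P s := by
      rw [Measure.map_apply hX hsmeas]; rfl
    rw [h0, hlaw, withDensity_apply _ hsmeas]
  rw [step1]
  conv_lhs => rw [hvol]
  rw [Measure.restrict_smul, lintegral_smul_measure, setLIntegral_map hsmeas hfm hT, hpre]
  have hinte : ∀ w : Fin n → ℝ,
      (g ((Matrix.toLin' A) w ⬝ᵥ S⁻¹.mulVec ((Matrix.toLin' A) w)) : ℝ≥0∞)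
          / ENNReal.ofReal (Real.sqrt S.det)
        = (g (∑ i, w i ^ 2 / |D i|) : ℝ≥0∞) * (ENNReal.ofReal (Real.sqrt S.det))⁻¹ := by
    intro w
    rw [Matrix.toLin'_apply, hxSx w, div_eq_mul_inv]
  have hc0 : ENNReal.ofReal (Real.sqrt S.det) ≠ 0 := (ENNReal.ofReal_pos.mpr hdetSpos).ne'
  have hctop : ENNReal.ofReal (Real.sqrt S.det) ≠ ⊤ := ENNReal.ofReal_ne_top
  rw [lintegral_congr hinte,
    lintegral_mul_const' _ _ (ENNReal.inv_ne_top.mpr hc0)]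
  rw [hdetA, ENNReal.ofReal_mul hdetSpos.le, ENNReal.ofReal_inv_of_pos hsqrtprodpos]
  generalize (∫⁻ w in {w : Fin n → ℝ |
      2 * (V + Θ) ≤ (∑ i ∈ Finset.univ.filter fun i => D i < 0, w i ^ 2)
        - ∑ i ∈ Finset.univ.filter fun i => 0 < D i, w i ^ 2},
      (g (∑ i, w i ^ 2 / |D i|) : ℝ≥0∞) ∂volume) = I
  rw [smul_eq_mul, show ENNReal.ofReal (Real.sqrt S.det) * (ENNReal.ofReal (Real.sqrt (∏ i, |D i|)))⁻¹
        * (I * (ENNReal.ofReal (Real.sqrt S.det))⁻¹)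
      = (ENNReal.ofReal (Real.sqrt (∏ i, |D i|)))⁻¹ * I
        * (ENNReal.ofReal (Real.sqrt S.det) * (ENNReal.ofReal (Real.sqrt S.det))⁻¹) from by ring,
    ENNReal.mul_inv_cancel hc0 hctop, mul_one]
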